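/- arXiv:1511.06805 — 6 statements merged into one kernel-verified Lean document; each statement's English description precedes it below -/
import Mathlib

section
/- Let x ∈ (0,1), b = (1 + √(1 − x²))/x, s ≥ 0, and c = x²(2 − s·x + 3√(1 − x²)) / (4(3 − 2x² + 3√(1 − x²))). Then the function m(z) = (1 + x·z) − c(1 − z²) is strictly positive for all z ∈ (−1, 1). -/
/-!
Since `c ≤ x / 2` and `1 - z ^ 2 ≥ 0`, we get
`m(z) ≥ 1 + x z - (x / 2)(1 - z ^ 2) = (1 - x) + x (1 + z) ^ 2 / 2 > 0`;
the bound on `c` follows by comparing numerator and denominator term by term.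
-/

lemma one_add_mul_sub_mul_one_sub_sq_pos {x c z : ℝ} (hx0 : 0 ≤ x) (hx1 : x ≤ 1)
    (hc : c ≤ x / 2) (hz1 : -1 < z) (hz2 : z < 1) :
    0 < 1 + x * z - c * (1 - z ^ 2) := by
  have hz : 0 ≤ 1 - z ^ 2 := by nlinarith
  have hlower : (1 - x) + x * (1 + z) ^ 2 / 2 ≤ 1 + x * z - c * (1 - z ^ 2) := by
    nlinarith [mul_le_mul_of_nonneg_right hc hz]
  rcases hx1.lt_or_eq with hx1 | rfl
  · nlinarith [mul_nonneg hx0 (sq_nonneg (1 + z))]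
  · nlinarith [sq_pos_of_pos (show 0 < 1 + z by linarith)]

lemma sq_mul_div_le_half {x s q : ℝ} (hx0 : 0 ≤ x) (hx1 : x ≤ 1) (hs : 0 ≤ s) (hq : 0 ≤ q) :
    x ^ 2 * (2 - s * x + 3 * q) / (4 * (3 - 2 * x ^ 2 + 3 * q)) ≤ x / 2 := by
  have hD : 0 < 4 * (3 - 2 * x ^ 2 + 3 * q) := by nlinarith
  have hnum : x * (2 - s * x + 3 * q) ≤ 2 * (3 - 2 * x ^ 2 + 3 * q) := by
    nlinarith [mul_nonneg hs (sq_nonneg x), mul_le_mul_of_nonneg_left hx1 hq]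
  rw [div_le_div_iff₀ hD two_pos]
  nlinarith [mul_le_mul_of_nonneg_left hnum hx0]

theorem stmt_1 (x s : ℝ) (hx0 : 0 < x) (hx1 : x < 1) (hs : 0 ≤ s)
    (c : ℝ)
    (hc : c = x ^ 2 * (2 - s * x + 3 * Real.sqrt (1 - x ^ 2)) /
      (4 * (3 - 2 * x ^ 2 + 3 * Real.sqrt (1 - x ^ 2)))) :
    ∀ z : ℝ, -1 < z → z < 1 → 0 < (1 + x * z) - c * (1 - z ^ 2) := by
  intro z hz1 hz2
  have hc_le : c ≤ x / 2 := hc ▸ sq_mul_div_le_half hx0.le hx1.le hs (Real.sqrt_nonneg _)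
  exact one_add_mul_sub_mul_one_sub_sq_pos hx0.le hx1.le hc_le hz1 hz2
end

section
/- For any fixed s < 0, the function g(x) = 6 − 2x − 4x² + s·x² + (6 − 3x)√(1 − x²) is strictly monotone decreasing on [0,1], with g(0) = 12 > 0 and g(1) = s < 0; hence g has a unique root in (0,1). -/
open Set

/-! The polynomial part `6 - 2x + (s - 4)x²` is strictly decreasing on `[0, 1]` as soon as
`s ≤ 4`, and `(6 - 3x)√(1 - x²)` is a product of two nonnegative nonincreasing factors there.
The root then comes from the intermediate value theorem, and strict monotonicity makes it unique. -/

lemma antitoneOn_mul_sqrt_one_sub_sq {a b : ℝ} (hb : 0 ≤ b) (hba : b ≤ a) :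
    AntitoneOn (fun x : ℝ => (a - b * x) * Real.sqrt (1 - x ^ 2)) (Icc 0 1) := by
  rintro x ⟨hx0, -⟩ y ⟨-, hy1⟩ hxy
  have hsqrt : Real.sqrt (1 - y ^ 2) ≤ Real.sqrt (1 - x ^ 2) :=
    Real.sqrt_le_sqrt (by nlinarith)
  exact mul_le_mul (by nlinarith) hsqrt (Real.sqrt_nonneg _) (by nlinarith)

lemma strictAntiOn_sub_add_mul_sq {s : ℝ} (hs : s ≤ 4) :
    StrictAntiOn (fun x : ℝ => 6 - 2 * x - 4 * x ^ 2 + s * x ^ 2) (Icc 0 1) := by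
  rintro x ⟨hx0, -⟩ y ⟨-, -⟩ hxy
  have hsq : (s - 4) * y ^ 2 ≤ (s - 4) * x ^ 2 :=
    mul_le_mul_of_nonpos_left (pow_le_pow_left₀ hx0 hxy.le 2) (by linarith)
  dsimp only
  linarith

lemma strictAntiOn_add_mul_sqrt_one_sub_sq {s : ℝ} (hs : s ≤ 4) :
    StrictAntiOn
      (fun x : ℝ => 6 - 2 * x - 4 * x ^ 2 + s * x ^ 2 + (6 - 3 * x) * Real.sqrt (1 - x ^ 2))
      (Icc 0 1) :=
  (strictAntiOn_sub_add_mul_sq hs).add_antitone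
    (antitoneOn_mul_sqrt_one_sub_sq (by norm_num) (by norm_num))

lemma StrictAntiOn.existsUnique_eq_zero_Ioo {f : ℝ → ℝ} {a b : ℝ} (hab : a ≤ b)
    (hf : StrictAntiOn f (Icc a b)) (hcont : ContinuousOn f (Icc a b))
    (hb : f b < 0) (ha : 0 < f a) :
    ∃! x, x ∈ Ioo a b ∧ f x = 0 := by
  obtain ⟨x, hx, hfx⟩ := intermediate_value_Ioo' hab hcont ⟨hb, ha⟩
  refine ⟨x, ⟨hx, hfx⟩, fun y ⟨hy, hfy⟩ => ?_⟩
  exact hf.injOn (Ioo_subset_Icc_self hy) (Ioo_subset_Icc_self hx) (hfy.trans hfx.symm)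

theorem stmt_3 (s : ℝ) (hs : s < 0) :
    StrictAntiOn
      (fun x : ℝ => 6 - 2 * x - 4 * x ^ 2 + s * x ^ 2 + (6 - 3 * x) * Real.sqrt (1 - x ^ 2))
      (Set.Icc 0 1) ∧
    (6 - 2 * (0:ℝ) - 4 * (0:ℝ) ^ 2 + s * (0:ℝ) ^ 2 + (6 - 3 * 0) * Real.sqrt (1 - (0:ℝ) ^ 2)
      = 12) ∧ (12:ℝ) > 0 ∧
    (6 - 2 * (1:ℝ) - 4 * (1:ℝ) ^ 2 + s * (1:ℝ) ^ 2 + (6 - 3 * 1) * Real.sqrt (1 - (1:ℝ) ^ 2)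
      = s) ∧ s < 0 ∧
    ∃! x : ℝ, x ∈ Set.Ioo (0:ℝ) 1 ∧
      6 - 2 * x - 4 * x ^ 2 + s * x ^ 2 + (6 - 3 * x) * Real.sqrt (1 - x ^ 2) = 0 := by
  have hanti := strictAntiOn_add_mul_sqrt_one_sub_sq (s := s) (by linarith)
  have h0 : 6 - 2 * (0:ℝ) - 4 * (0:ℝ) ^ 2 + s * (0:ℝ) ^ 2
      + (6 - 3 * 0) * Real.sqrt (1 - (0:ℝ) ^ 2) = 12 := by norm_num
  have h1 : 6 - 2 * (1:ℝ) - 4 * (1:ℝ) ^ 2 + s * (1:ℝ) ^ 2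
      + (6 - 3 * 1) * Real.sqrt (1 - (1:ℝ) ^ 2) = s := by norm_num
  refine ⟨hanti, h0, by norm_num, h1, hs, ?_⟩
  exact hanti.existsUnique_eq_zero_Ioo zero_le_one (by fun_prop)
    (by rwa [h1]) (by rw [h0]; norm_num)
end

section
/- For any s < 0, at x = 1/(s² + 2) the function g(x) = 6 − 2x − 4x² + s·x² + (6 − 3x)√(1 − x²) is strictly positive. -/
/-!
With `x = 1 / (s ^ 2 + 2) ∈ (0, 1/2]`, the only possibly negative term `s x²` is bounded below
by `-x`, because `s x² + x = x² (s² + s + 2)` and `s² + s + 2 > 0`. The polynomial part of `g` is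
then at least `6 - 3x - 4x² ≥ 7/2`, and the square-root term is nonnegative.
-/

open Real

noncomputable def g (s x : ℝ) : ℝ :=
  6 - 2 * x - 4 * x ^ 2 + s * x ^ 2 + (6 - 3 * x) * √(1 - x ^ 2)

lemma g_pos_of_neg_le_mul_sq {s x : ℝ} (hx₀ : 0 ≤ x) (hx : x ≤ 1 / 2)
    (hsx : -x ≤ s * x ^ 2) : 0 < g s x := by
  have hsqrt : 0 ≤ (6 - 3 * x) * √(1 - x ^ 2) :=
    mul_nonneg (by linarith) (sqrt_nonneg _)
  unfold g
  nlinarith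

lemma one_div_sq_add_two_le_half (s : ℝ) : 1 / (s ^ 2 + 2) ≤ 1 / 2 :=
  one_div_le_one_div_of_le two_pos (by nlinarith [sq_nonneg s])

lemma neg_one_div_sq_add_two_le (s : ℝ) :
    -(1 / (s ^ 2 + 2)) ≤ s * (1 / (s ^ 2 + 2)) ^ 2 := by
  set x := 1 / (s ^ 2 + 2)
  have hx : x = x ^ 2 * (s ^ 2 + 2) := by
    have : x * (s ^ 2 + 2) = 1 := by simp only [x]; field_simp
    linear_combination (-x) * this
  have hquad : 0 ≤ s ^ 2 + s + 2 := by nlinarith [sq_nonneg (s + 1 / 2)]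
  nlinarith [mul_nonneg (sq_nonneg x) hquad]

theorem stmt_4_general (s : ℝ) :
    0 < 6 - 2 * (1 / (s ^ 2 + 2)) - 4 * (1 / (s ^ 2 + 2)) ^ 2 + s * (1 / (s ^ 2 + 2)) ^ 2 +
      (6 - 3 * (1 / (s ^ 2 + 2))) * Real.sqrt (1 - (1 / (s ^ 2 + 2)) ^ 2) :=
  g_pos_of_neg_le_mul_sq (by positivity) (one_div_sq_add_two_le_half s)
    (neg_one_div_sq_add_two_le s)

theorem stmt_4 (s : ℝ) (hs : s < 0) :
    0 < 6 - 2 * (1 / (s ^ 2 + 2)) - 4 * (1 / (s ^ 2 + 2)) ^ 2 + s * (1 / (s ^ 2 + 2)) ^ 2 +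
      (6 - 3 * (1 / (s ^ 2 + 2))) * Real.sqrt (1 - (1 / (s ^ 2 + 2)) ^ 2) :=
  stmt_4_general s
end

section
/- Let s < 0 and let z₀ be a real number with −1 < z₀ < (2 + s)/(s − 2). Then the limit as x → 1⁻ of m_x(z₀) equals (1/4)(1 + z₀)·((2 − s)·z₀ + (2 + s)), and this value is strictly negative. -/
/-!
The coefficient `c` is continuous at `x = 1` (the denominator there is `4`), with `c(1) = (2 - s)/4`,
so the one-sided limit is just `m_1(z₀) = (1 + z₀)((2 - s) z₀ + (2 + s))/4`. Its first factor is
positive for `z₀ > -1`, and since `s - 2 < 0`, `z₀ < (2 + s)/(s - 2)` makes the second one negative.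
-/

open Filter Topology

noncomputable def coeffC (s x : ℝ) : ℝ :=
  x ^ 2 * (2 - s * x + 3 * Real.sqrt (1 - x ^ 2)) /
    (4 * (3 - 2 * x ^ 2 + 3 * Real.sqrt (1 - x ^ 2)))

lemma coeffC_one (s : ℝ) : coeffC s 1 = (2 - s) / 4 := by
  norm_num [coeffC]

lemma continuousAt_coeffC_one (s : ℝ) : ContinuousAt (coeffC s) 1 := by
  unfold coeffC
  fun_prop (disch := norm_num)

lemma tendsto_sub_coeffC_mul (s z : ℝ) :
    Tendsto (fun x => (1 + x * z) - coeffC s x * (1 - z ^ 2)) (𝓝[<] 1)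
      (𝓝 ((1 / 4) * (1 + z) * ((2 - s) * z + (2 + s)))) := by
  have hcont : ContinuousAt (fun x => (1 + x * z) - coeffC s x * (1 - z ^ 2)) 1 := by
    have := continuousAt_coeffC_one s
    fun_prop
  convert hcont.tendsto.mono_left nhdsWithin_le_nhds using 2
  rw [coeffC_one]
  ring

lemma quarter_mul_one_add_mul_neg {s z : ℝ} (hs : s < 2) (hz : -1 < z)
    (hz' : z < (2 + s) / (s - 2)) :
    (1 / 4) * (1 + z) * ((2 - s) * z + (2 + s)) < 0 := by
  have hlin : 2 + s < z * (s - 2) := (lt_div_iff_of_neg (by linarith)).mp hz'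
  have hpos : 0 < 1 + z := by linarith
  nlinarith

theorem stmt_5 (s z₀ : ℝ) (hs : s < 0) (hz₀ : -1 < z₀) (hz₀' : z₀ < (2 + s) / (s - 2)) :
    Filter.Tendsto
      (fun x : ℝ => (1 + x * z₀) -
        (x ^ 2 * (2 - s * x + 3 * Real.sqrt (1 - x ^ 2)) /
          (4 * (3 - 2 * x ^ 2 + 3 * Real.sqrt (1 - x ^ 2)))) * (1 - z₀ ^ 2))
      (nhdsWithin 1 (Set.Iio 1))
      (nhds ((1 / 4) * (1 + z₀) * ((2 - s) * z₀ + (2 + s)))) ∧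
    (1 / 4) * (1 + z₀) * ((2 - s) * z₀ + (2 + s)) < 0 :=
  ⟨tendsto_sub_coeffC_mul s z₀, quarter_mul_one_add_mul_neg (by linarith) hz₀ hz₀'⟩
end

section
/- Fix a real p > 0. The function k ↦ 4π√6·√(((2p+1)² − (2k+1)²)/((2p+1) + 2√((2p+1)² − (2k+1)²))) is strictly decreasing in k for 0 ≤ k < p. -/
open Set Real

/- In terms of `s = √D` the map is `s ↦ s ^ 2 / (P + 2 * s)`; after cross-multiplying,
`t ^ 2 (P + 2 s) - s ^ 2 (P + 2 t) = (t - s) (P (t + s) + 2 s t)`. -/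
lemma strictMonoOn_div_add_two_sqrt {P : ℝ} (hP : 0 < P) :
    StrictMonoOn (fun D : ℝ => D / (P + 2 * √D)) (Ici 0) := by
  intro D hD E hE hDE
  obtain ⟨s, hs, rfl⟩ : ∃ s, 0 ≤ s ∧ s ^ 2 = D := ⟨√D, sqrt_nonneg D, sq_sqrt hD⟩
  obtain ⟨t, ht, rfl⟩ : ∃ t, 0 ≤ t ∧ t ^ 2 = E := ⟨√E, sqrt_nonneg E, sq_sqrt hE⟩
  have hst : s < t := (pow_lt_pow_iff_left₀ hs ht two_ne_zero).mp hDE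
  simp only [sqrt_sq hs, sqrt_sq ht]
  rw [div_lt_div_iff₀ (by positivity) (by positivity)]
  nlinarith [mul_nonneg (sub_pos.mpr hst).le (mul_nonneg hs ht), mul_pos (sub_pos.mpr hst) hP]

lemma strictAntiOn_sub_sq_two_mul_add_one (c : ℝ) :
    StrictAntiOn (fun k : ℝ => c - (2 * k + 1) ^ 2) (Ici (-1 / 2)) := by
  intro a ha b _ hab
  have := mem_Ici.mp ha
  simp only
  nlinarith

theorem stmt_17 (p : ℝ) (hp : 0 < p) :
    StrictAntiOn
      (fun k : ℝ => 4 * Real.pi * Real.sqrt 6 *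
        Real.sqrt (((2 * p + 1) ^ 2 - (2 * k + 1) ^ 2) /
          ((2 * p + 1) + 2 * Real.sqrt ((2 * p + 1) ^ 2 - (2 * k + 1) ^ 2))))
      (Set.Ico (0:ℝ) p) := by
  have hdisc : StrictAntiOn (fun k : ℝ => (2 * p + 1) ^ 2 - (2 * k + 1) ^ 2) (Ico 0 p) :=
    (strictAntiOn_sub_sq_two_mul_add_one _).mono fun k hk => by
      simp only [mem_Ici]; linarith [hk.1]
  have hdisc_nonneg : MapsTo (fun k : ℝ => (2 * p + 1) ^ 2 - (2 * k + 1) ^ 2) (Ico 0 p) (Ici 0) :=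
    fun k hk => by simp only [mem_Ici, sub_nonneg]; nlinarith [hk.1, hk.2]
  have hratio_nonneg :
      MapsTo (fun D : ℝ => D / (2 * p + 1 + 2 * √D)) (Ici 0) (Ici 0) :=
    fun D hD => div_nonneg (mem_Ici.mp hD) (by positivity)
  exact (strictMono_mul_left_of_pos (by positivity : (0 : ℝ) < 4 * π * √6)).comp_strictAntiOn
    (strictMonoOn_sqrt.comp_strictAntiOn
      ((strictMonoOn_div_add_two_sqrt (by positivity)).comp_strictAntiOn hdisc hdisc_nonneg)
      (hratio_nonneg.comp hdisc_nonneg))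
end

section
/- Let g ≥ 2 be an integer and K ≥ 1 an integer, and suppose p > (1−g)²/k + 2k for every integer k with 1 ≤ k ≤ K. Then the function k ↦ 8π√3·[√((p² − k²)/(p + 2√(p² − k²))) + (1 − g)·√(1/(p + 2√(p² − k²)))] is strictly decreasing for integer k = 1, …, K. -/
/-!
Writing `s = √(p² - k²)` and `c = 1 - g`, the bracket equals `(s + c) / √(p + 2s)`. With
`u = √(p + 2s)` this is `u / 2 - (p - 2c) / (2u)`, which increases with `u` as soon as `c ≤ p`;
and `s`, hence `u`, decreases strictly in `k` as long as `k < p`, which the hypothesis on `p`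
guarantees.
-/

open Real Set

lemma sqrt_div_add_mul_sqrt_one_div {x : ℝ} (hx : 0 ≤ x) (d c : ℝ) :
    √(x / d) + c * √(1 / d) = (√x + c) / √d := by
  rw [sqrt_div hx, one_div, sqrt_inv, add_div]
  ring

lemma strictMonoOn_add_div_sqrt_add_two_mul {p c : ℝ} (hp : 0 < p) (hc : c ≤ p) :
    StrictMonoOn (fun s => (s + c) / √(p + 2 * s)) (Ici 0) := by
  intro s₂ (hs₂ : 0 ≤ s₂) s₁ (hs₁ : 0 ≤ s₁) hs
  set u₁ := √(p + 2 * s₁)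
  set u₂ := √(p + 2 * s₂)
  have hu₁sq : u₁ ^ 2 = p + 2 * s₁ := sq_sqrt (by linarith)
  have hu₂sq : u₂ ^ 2 = p + 2 * s₂ := sq_sqrt (by linarith)
  have hu₂ : √p ≤ u₂ := sqrt_le_sqrt (by linarith)
  have hu : u₂ < u₁ := sqrt_lt_sqrt (by linarith) (by linarith)
  have hsqrtp : 0 < √p := sqrt_pos.mpr hp
  have hp_lt : p < u₁ * u₂ := by
    calc p = √p * √p := (mul_self_sqrt hp.le).symm
      _ < u₁ * u₂ := mul_lt_mul (by linarith) hu₂ hsqrtp (by linarith)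
  show (s₂ + c) / u₂ < (s₁ + c) / u₁
  rw [div_lt_div_iff₀ (by linarith) (by linarith)]
  have hid : 2 * ((s₁ + c) * u₂ - (s₂ + c) * u₁) = (u₁ - u₂) * (u₁ * u₂ + p - 2 * c) := by
    linear_combination u₁ * hu₂sq - u₂ * hu₁sq
  have hfac : 0 < (u₁ - u₂) * (u₁ * u₂ + p - 2 * c) := mul_pos (by linarith) (by linarith)
  linarith

lemma sqrt_sq_sub_sq_lt_of_lt {p a b : ℝ} (ha : 0 ≤ a) (hab : a < b) (hbp : b ≤ p) :
    √(p ^ 2 - b ^ 2) < √(p ^ 2 - a ^ 2) :=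
  sqrt_lt_sqrt (by nlinarith) (by nlinarith)

theorem stmt_18_general (g K : ℕ) (p : ℝ)
    (hp : ∀ k : ℕ, 1 ≤ k → k ≤ K → p > ((1:ℝ) - g) ^ 2 / k + 2 * k) :
    ∀ k₁ k₂ : ℕ, 1 ≤ k₁ → k₁ < k₂ → k₂ ≤ K →
      8 * Real.pi * Real.sqrt 3 *
          (Real.sqrt ((p ^ 2 - (k₂:ℝ) ^ 2) / (p + 2 * Real.sqrt (p ^ 2 - (k₂:ℝ) ^ 2))) +
            ((1:ℝ) - g) * Real.sqrt (1 / (p + 2 * Real.sqrt (p ^ 2 - (k₂:ℝ) ^ 2)))) <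
        8 * Real.pi * Real.sqrt 3 *
          (Real.sqrt ((p ^ 2 - (k₁:ℝ) ^ 2) / (p + 2 * Real.sqrt (p ^ 2 - (k₁:ℝ) ^ 2))) +
            ((1:ℝ) - g) * Real.sqrt (1 / (p + 2 * Real.sqrt (p ^ 2 - (k₁:ℝ) ^ 2)))) := by
  intro k₁ k₂ hk₁ hlt hk₂
  have hk₁R : (1:ℝ) ≤ k₁ := by exact_mod_cast hk₁
  have hltR : (k₁:ℝ) < k₂ := by exact_mod_cast hlt
  have hpk₂ : 2 * (k₂:ℝ) < p := by
    have := hp k₂ (hk₁.trans hlt.le) hk₂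
    have : 0 ≤ ((1:ℝ) - g) ^ 2 / k₂ := by positivity
    linarith
  have hgp : (1:ℝ) - g ≤ p := by linarith [(Nat.cast_nonneg g : (0:ℝ) ≤ g)]
  have hs : √(p ^ 2 - (k₂:ℝ) ^ 2) < √(p ^ 2 - (k₁:ℝ) ^ 2) :=
    sqrt_sq_sub_sq_lt_of_lt (by linarith) hltR (by linarith)
  rw [sqrt_div_add_mul_sqrt_one_div (by nlinarith), sqrt_div_add_mul_sqrt_one_div (by nlinarith)]
  refine mul_lt_mul_of_pos_left ?_ (by positivity)
  exact strictMonoOn_add_div_sqrt_add_two_mul (by linarith) hgp (sqrt_nonneg _) (sqrt_nonneg _) hs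

theorem stmt_18 (g K : ℕ) (hg : 2 ≤ g) (hK : 1 ≤ K) (p : ℝ)
    (hp : ∀ k : ℕ, 1 ≤ k → k ≤ K → p > ((1:ℝ) - g) ^ 2 / k + 2 * k) :
    ∀ k₁ k₂ : ℕ, 1 ≤ k₁ → k₁ < k₂ → k₂ ≤ K →
      8 * Real.pi * Real.sqrt 3 *
          (Real.sqrt ((p ^ 2 - (k₂:ℝ) ^ 2) / (p + 2 * Real.sqrt (p ^ 2 - (k₂:ℝ) ^ 2))) +
            ((1:ℝ) - g) * Real.sqrt (1 / (p + 2 * Real.sqrt (p ^ 2 - (k₂:ℝ) ^ 2)))) <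
        8 * Real.pi * Real.sqrt 3 *
          (Real.sqrt ((p ^ 2 - (k₁:ℝ) ^ 2) / (p + 2 * Real.sqrt (p ^ 2 - (k₁:ℝ) ^ 2))) +
            ((1:ℝ) - g) * Real.sqrt (1 / (p + 2 * Real.sqrt (p ^ 2 - (k₁:ℝ) ^ 2)))) :=
  stmt_18_general g K p hp
end
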